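/- There is a universal constant δ₀ > 0 such that for every positive integer m, every x ∈ {0,1,...,m}, and every 0 ≤ δ ≤ δ₀, one has exp(−δ²/δ₀²) · exp(h(m,x) δ/m) ≤ G_{m,x}(δ/m) / G_{m,x}(0) ≤ exp(h(m,x) δ/m), where G_{m,x}(δ') := IS(m, δ')(x). Moreover, the upper bound holds for all δ ≥ 0. -/

import Mathlib

/-!
With `s = 2x − m` one has `h(m,x) = (s² − m)/2`, so the ratio equals `exp(h δ') · 2^m / Z_m(δ')`.
Under `Binomial(m, 1/2)` the spin `s` has variance `m`, so `h(m,·)` has mean zero and Jensen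
gives `Z_m(δ') ≥ 2^m`: the upper bound. For the lower bound, the Hubbard–Stratonovich identity
`exp(c s²) = π^{-1/2} ∫ exp(−u² + 2√c s u) du` turns the sum over `x` into
`∫ exp(−u²) (2 cosh(2√c u))^m du`, and `cosh y ≤ exp(y²/2)` bounds it by a Gaussian integral.
This gives `Z_m(δ/m) ≤ 2^m exp(−δ/2) / √(1 − δ) ≤ 2^m exp(4δ²)` for `0 ≤ δ ≤ 1/2`,
so `δ₀ = 1/2` works.
-/

open Finset

/-- `h(n,x) = 2x² − 2nx + n(n−1)/2`. -/
noncomputable def hIsing (n x : ℕ) : ℝ :=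
  2 * (x : ℝ) ^ 2 - 2 * (n : ℝ) * (x : ℝ) + (n : ℝ) * ((n : ℝ) - 1) / 2

/-- Partition function `Z_n(δ') = Σ_{x=0}^n binom(n,x) exp(h(n,x)δ')`. -/
noncomputable def Zpart (n : ℕ) (δ' : ℝ) : ℝ :=
  ∑ x ∈ Finset.range (n + 1), (n.choose x : ℝ) * Real.exp (hIsing n x * δ')

/-- The pmf of the one-dimensional Ising distribution `IS(n, δ')` at `x`;
`G_{m,x}(δ') = IS(m, δ')(x)`. -/
noncomputable def isingPMF (n : ℕ) (δ' : ℝ) (x : ℕ) : ℝ :=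
  (n.choose x : ℝ) * Real.exp (hIsing n x * δ') / Zpart n δ'

open Real MeasureTheory

/-- `2⁻ᵐ • spinSum m f` is `𝔼 f(S)` for `S` the sum of `m` independent uniform signs `±1`. -/
noncomputable def spinSum (m : ℕ) (f : ℝ → ℝ) : ℝ :=
  ∑ x ∈ range (m + 1), (m.choose x : ℝ) * f (2 * x - m)

theorem spinSum_zero (f : ℝ → ℝ) : spinSum 0 f = f 0 := by
  simp [spinSum]

theorem spinSum_succ (m : ℕ) (f : ℝ → ℝ) :
    spinSum (m + 1) f = spinSum m (fun s => f (s - 1)) + spinSum m (fun s => f (s + 1)) := by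
  unfold spinSum
  convert sum_choose_succ_mul (fun i j => f ((i : ℝ) - j)) m using 1
  · refine sum_congr rfl fun i hi => ?_
    rw [Nat.cast_sub (mem_range_succ_iff.mp hi)]
    push_cast
    ring_nf
  · congr 1 <;> refine sum_congr rfl fun i hi => ?_
    · rw [Nat.cast_sub (by have := mem_range_succ_iff.mp hi; omega)]
      push_cast
      ring_nf
    · rw [Nat.cast_sub (mem_range_succ_iff.mp hi)]
      push_cast
      ring_nf

theorem spinSum_mono {m : ℕ} {f g : ℝ → ℝ} (hfg : ∀ s, f s ≤ g s) :
    spinSum m f ≤ spinSum m g :=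
  sum_le_sum fun _ _ => mul_le_mul_of_nonneg_left (hfg _) (Nat.cast_nonneg _)

theorem spinSum_const_mul (m : ℕ) (c : ℝ) (f : ℝ → ℝ) :
    spinSum m (fun s => c * f s) = c * spinSum m f := by
  simp only [spinSum, mul_sum]
  exact sum_congr rfl fun _ _ => mul_left_comm _ _ _

theorem spinSum_quadratic (m : ℕ) (a b c : ℝ) :
    spinSum m (fun s => a + b * s + c * s ^ 2) = (a + c * m) * 2 ^ m := by
  induction m generalizing a b with
  | zero => simp [spinSum_zero]
  | succ m ih =>
    have shift (t : ℝ) : (fun s => a + b * (s + t) + c * (s + t) ^ 2) =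
        fun s => (a + b * t + c * t ^ 2) + (b + 2 * c * t) * s + c * s ^ 2 := by
      funext s; ring
    simp only [spinSum_succ, sub_eq_add_neg]
    rw [shift (-1), shift 1, ih, ih]
    push_cast
    ring

theorem spinSum_exp_mul (m : ℕ) (a : ℝ) :
    spinSum m (fun s => exp (a * s)) = (2 * cosh a) ^ m := by
  induction m with
  | zero => simp [spinSum_zero]
  | succ m ih =>
    have shift (t : ℝ) : (fun s => exp (a * (s + t))) = fun s => exp (a * t) * exp (a * s) := by
      funext s; rw [← exp_add]; ring_nf
    simp only [spinSum_succ, sub_eq_add_neg]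
    rw [shift (-1), shift 1, spinSum_const_mul, spinSum_const_mul, ih, cosh_eq]
    ring_nf

theorem hIsing_eq_sq (n x : ℕ) : hIsing n x = ((2 * x - n) ^ 2 - n) / 2 := by
  unfold hIsing; ring

theorem Zpart_eq_spinSum (n : ℕ) (δ' : ℝ) :
    Zpart n δ' = spinSum n (fun s => exp ((s ^ 2 - n) / 2 * δ')) := by
  simp only [Zpart, spinSum, hIsing_eq_sq]

theorem Zpart_zero (n : ℕ) : Zpart n 0 = 2 ^ n := by
  simpa [Zpart_eq_spinSum] using spinSum_quadratic n 1 0 0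

theorem Zpart_pos (n : ℕ) (δ' : ℝ) : 0 < Zpart n δ' :=
  sum_pos (fun x hx => mul_pos (Nat.cast_pos.mpr (Nat.choose_pos (mem_range_succ_iff.mp hx)))
    (exp_pos _)) ⟨0, by simp⟩

/-- Jensen: `h(n, ·)` has mean zero under `Binomial(n, 1/2)`. -/
theorem two_pow_le_Zpart (n : ℕ) (δ' : ℝ) : 2 ^ n ≤ Zpart n δ' := by
  calc (2 : ℝ) ^ n = spinSum n (fun s => (1 - n * δ' / 2) + 0 * s + δ' / 2 * s ^ 2) := by
        rw [spinSum_quadratic]; ring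
    _ ≤ Zpart n δ' := by
        rw [Zpart_eq_spinSum]
        refine spinSum_mono fun s => ?_
        convert add_one_le_exp ((s ^ 2 - n) / 2 * δ') using 1
        ring

theorem exp_neg_sq_add_mul_eq (b u : ℝ) :
    exp (-u ^ 2 + b * u) = exp (b ^ 2 / 4) * exp (-1 * (u - b / 2) ^ 2) := by
  rw [← exp_add]; ring_nf

theorem integrable_exp_neg_sq_add_mul (b : ℝ) : Integrable fun u : ℝ => exp (-u ^ 2 + b * u) := by
  simp only [exp_neg_sq_add_mul_eq]
  exact ((integrable_exp_neg_mul_sq one_pos).comp_sub_right (b / 2)).const_mul _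

theorem integral_exp_neg_sq_add_mul (b : ℝ) :
    ∫ u : ℝ, exp (-u ^ 2 + b * u) = √π * exp (b ^ 2 / 4) := by
  simp only [exp_neg_sq_add_mul_eq]
  rw [integral_const_mul, integral_sub_right_eq_self (fun u => exp (-1 * u ^ 2)),
    integral_gaussian, div_one, mul_comm]

theorem spinSum_integral {α : Type*} [MeasurableSpace α] {μ : Measure α} (m : ℕ)
    {F : ℝ → α → ℝ} (hF : ∀ s, Integrable (F s) μ) :
    spinSum m (fun s => ∫ u, F s u ∂μ) = ∫ u, spinSum m (fun s => F s u) ∂μ := by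
  simp only [spinSum]
  rw [integral_finsetSum _ fun _ _ => (hF _).const_mul _]
  simp only [integral_const_mul]

/-- The Hubbard–Stratonovich transform: a Gaussian integral linearises the square `s²`. -/
theorem spinSum_exp_mul_sq (m : ℕ) {c : ℝ} (hc : 0 ≤ c) :
    spinSum m (fun s => exp (c * s ^ 2)) =
      (√π)⁻¹ * ∫ u : ℝ, exp (-u ^ 2) * (2 * cosh (2 * √c * u)) ^ m := by
  have hterm (s : ℝ) :
      exp (c * s ^ 2) = (√π)⁻¹ * ∫ u : ℝ, exp (-u ^ 2 + 2 * √c * s * u) := by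
    rw [integral_exp_neg_sq_add_mul, ← mul_assoc, inv_mul_cancel₀ (by positivity), one_mul,
      mul_pow, mul_pow, sq_sqrt hc]
    ring_nf
  simp only [hterm]
  rw [spinSum_const_mul, spinSum_integral m fun _ => integrable_exp_neg_sq_add_mul _]
  congr 2
  funext u
  rw [← spinSum_exp_mul, ← spinSum_const_mul]
  congr
  funext s
  rw [← exp_add]
  ring_nf

theorem spinSum_exp_mul_sq_le (m : ℕ) {c : ℝ} (hc : 0 ≤ c) (hcm : 2 * c * m < 1) :
    spinSum m (fun s => exp (c * s ^ 2)) ≤ 2 ^ m / √(1 - 2 * c * m) := by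
  have hb : 0 < 1 - 2 * c * m := by linarith
  have hpt (u : ℝ) : exp (-u ^ 2) * (2 * cosh (2 * √c * u)) ^ m ≤
      2 ^ m * exp (-(1 - 2 * c * m) * u ^ 2) := by
    calc exp (-u ^ 2) * (2 * cosh (2 * √c * u)) ^ m
        ≤ exp (-u ^ 2) * (2 * exp ((2 * √c * u) ^ 2 / 2)) ^ m := by
          gcongr; exact cosh_le_exp_half_sq _
      _ = 2 ^ m * exp (-(1 - 2 * c * m) * u ^ 2) := by
          rw [mul_pow, ← exp_nat_mul, mul_left_comm, ← exp_add, mul_pow, mul_pow, sq_sqrt hc]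
          ring_nf
  have hgauss := (integrable_exp_neg_mul_sq hb).const_mul (2 ^ m)
  rw [spinSum_exp_mul_sq m hc]
  calc (√π)⁻¹ * ∫ u : ℝ, exp (-u ^ 2) * (2 * cosh (2 * √c * u)) ^ m
      ≤ (√π)⁻¹ * ∫ u : ℝ, 2 ^ m * exp (-(1 - 2 * c * m) * u ^ 2) := by
        refine mul_le_mul_of_nonneg_left ?_ (by positivity)
        refine integral_mono (hgauss.mono' (by fun_prop) (ae_of_all _ fun u => ?_)) hgauss hpt
        rw [norm_of_nonneg (by positivity)]
        exact hpt u
    _ = 2 ^ m / √(1 - 2 * c * m) := by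
        rw [integral_const_mul, integral_gaussian, sqrt_div pi_pos.le]
        field_simp

theorem exp_neg_half_div_sqrt_one_sub_le {δ : ℝ} (hδ : δ ≤ 1 / 2) :
    exp (-(δ / 2)) / √(1 - δ) ≤ exp (4 * δ ^ 2) := by
  have hsq : exp (-(δ + 8 * δ ^ 2)) ≤ 1 - δ := by
    rw [exp_neg, inv_le_iff_one_le_mul₀ (exp_pos _)]
    nlinarith [add_one_le_exp (δ + 8 * δ ^ 2)]
  rw [div_le_iff₀ (sqrt_pos.2 (by linarith))]
  calc exp (-(δ / 2)) = exp (4 * δ ^ 2) * √(exp (-(δ + 8 * δ ^ 2))) := by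
        rw [← exp_half, ← exp_add]; ring_nf
    _ ≤ exp (4 * δ ^ 2) * √(1 - δ) := by gcongr

theorem Zpart_div_le_two_pow_mul_exp {m : ℕ} (hm : 0 < m) {δ : ℝ} (h0 : 0 ≤ δ)
    (h1 : δ ≤ 1 / 2) :
    Zpart m (δ / m) ≤ 2 ^ m * exp (4 * δ ^ 2) := by
  have hm' : (m : ℝ) ≠ 0 := Nat.cast_ne_zero.2 hm.ne'
  have hsplit : Zpart m (δ / m) =
      exp (-(δ / 2)) * spinSum m (fun s => exp (δ / (2 * m) * s ^ 2)) := by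
    rw [Zpart_eq_spinSum, ← spinSum_const_mul]
    congr
    funext s
    rw [← exp_add]
    congr 1
    field_simp
    ring
  have hcm : 2 * (δ / (2 * m)) * m = δ := by field_simp
  have hsum := spinSum_exp_mul_sq_le m (c := δ / (2 * m)) (by positivity) (by linarith)
  rw [hcm] at hsum
  calc Zpart m (δ / m) ≤ exp (-(δ / 2)) * (2 ^ m / √(1 - δ)) := by
        rw [hsplit]; gcongr
    _ = 2 ^ m * (exp (-(δ / 2)) / √(1 - δ)) := by ring
    _ ≤ 2 ^ m * exp (4 * δ ^ 2) := by gcongr; exact exp_neg_half_div_sqrt_one_sub_le h1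

theorem isingPMF_div_isingPMF_zero {n x : ℕ} (hx : x ≤ n) (δ' : ℝ) :
    isingPMF n δ' x / isingPMF n 0 x = exp (hIsing n x * δ') * (2 ^ n / Zpart n δ') := by
  have hC : (n.choose x : ℝ) ≠ 0 := Nat.cast_ne_zero.2 (Nat.choose_pos hx).ne'
  have hZ := (Zpart_pos n δ').ne'
  simp only [isingPMF, mul_zero, exp_zero, mul_one, Zpart_zero]
  field_simp

/-- Two-sided ratio bound for the one-dimensional Ising pmf:
`exp(−δ²/δ₀²)·exp(h(m,x)δ/m) ≤ G_{m,x}(δ/m)/G_{m,x}(0) ≤ exp(h(m,x)δ/m)`,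
the lower bound for `0 ≤ δ ≤ δ₀` and the upper bound for all `δ ≥ 0`. -/
theorem ising_ratio_bound :
    ∃ δ₀ : ℝ, 0 < δ₀ ∧
    ∀ (m x : ℕ) (δ : ℝ), 0 < m → x ≤ m →
      ((0 ≤ δ → δ ≤ δ₀ →
        Real.exp (-(δ ^ 2 / δ₀ ^ 2)) * Real.exp (hIsing m x * (δ / m)) ≤
          isingPMF m (δ / m) x / isingPMF m 0 x) ∧
       (0 ≤ δ →
        isingPMF m (δ / m) x / isingPMF m 0 x ≤
          Real.exp (hIsing m x * (δ / m)))) := by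
  refine ⟨1 / 2, by norm_num, fun m x δ hm hx => ⟨fun h0 h1 => ?_, fun _ => ?_⟩⟩ <;>
    rw [isingPMF_div_isingPMF_zero hx]
  · have hZ : exp (-(δ ^ 2 / (1 / 2) ^ 2)) ≤ 2 ^ m / Zpart m (δ / m) := by
      rw [le_div_iff₀ (Zpart_pos _ _), show δ ^ 2 / (1 / 2) ^ 2 = 4 * δ ^ 2 by ring, exp_neg,
        inv_mul_le_iff₀ (exp_pos _), mul_comm]
      exact Zpart_div_le_two_pow_mul_exp hm h0 h1
    rw [mul_comm]
    exact mul_le_mul_of_nonneg_left hZ (exp_pos _).le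
  · have hZ : 2 ^ m / Zpart m (δ / m) ≤ 1 :=
      (div_le_one (Zpart_pos _ _)).2 (two_pow_le_Zpart _ _)
    simpa using mul_le_mul_of_nonneg_left hZ (exp_pos (hIsing m x * (δ / m))).le
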